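/- arXiv:2012.03893 — 2 statements merged into one kernel-verified Lean document; each statement's English description precedes it below -/
import Mathlib

section
/- Let F ⊆ {-1,1}^X with Ldim(F) = d and let F̃ := {SOA_G : G ⊆ F, G nonempty and (d+1)-irreducible}. Then if F̃ shatters a depth-(d+1) X-valued binary tree x, so does F; consequently F̃ cannot shatter any tree of depth d+1. -/
open Classical

/-- The subclass of `G` consistent with a finite list of labeled examples. -/
def restrictList {X : Type*} (G : Set (X → Bool)) (S : List (X × Bool)) : Set (X → Bool) :=
  {f ∈ G | ∀ p ∈ S, f p.1 = p.2}

/-- `G` restricted to hypotheses with `f x = b`. -/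
def res {X : Type*} (G : Set (X → Bool)) (x : X) (b : Bool) : Set (X → Bool) :=
  {f ∈ G | f x = b}

/-- The subclass of `G` consistent with the branch `b` of the binary tree `t`
(nodes of `t` are indexed by the list of bits on the path from the root). -/
def branchRestrict {X : Type*} (G : Set (X → Bool)) (t : List Bool → X) (b : List Bool) :
    Set (X → Bool) :=
  {f ∈ G | ∀ i < b.length, f (t (b.take i)) = b.getD i false}

/-- `G` shatters the complete binary tree `t` to depth `n`. -/
def ShattersTree {X : Type*} (G : Set (X → Bool)) (t : List Bool → X) (n : ℕ) : Prop :=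
  ∀ b : List Bool, b.length = n → (branchRestrict G t b).Nonempty

/-- `G` shatters some complete `X`-valued binary tree of depth `n`. -/
def ShattersDepth {X : Type*} (G : Set (X → Bool)) (n : ℕ) : Prop :=
  ∃ t : List Bool → X, ShattersTree G t n

/-- Littlestone dimension: the largest depth of a shattered tree, with `Ldim ∅ = ⊥` (i.e. `-1`). -/
noncomputable def Ldim {X : Type*} (G : Set (X → Bool)) : WithBot ℕ∞ :=
  ⨆ n : {n : ℕ // ShattersDepth G n}, (n.1 : WithBot ℕ∞)

/-- `G` is `k`-irreducible: every depth-`k` tree has a branch whose restriction preserves `Ldim`. -/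
def Irred {X : Type*} (G : Set (X → Bool)) (k : ℕ) : Prop :=
  ∀ t : List Bool → X, ∃ b : List Bool, b.length = k ∧
    Ldim (branchRestrict G t b) = Ldim G

/-- The SOA classifier of `G`: `SOA G x = true` iff `Ldim (G|_(x,1)) ≥ Ldim (G|_(x,-1))`. -/
noncomputable def SOA {X : Type*} (G : Set (X → Bool)) (x : X) : Bool :=
  if Ldim (res G x false) ≤ Ldim (res G x true) then true else false

section Helpers

variable {X : Type*}

lemma branchRestrict_mono {G H : Set (X → Bool)} (h : G ⊆ H) (t : List Bool → X) (b : List Bool) :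
    branchRestrict G t b ⊆ branchRestrict H t b := fun f hf => ⟨h hf.1, hf.2⟩

lemma shattersDepth_mono {G H : Set (X → Bool)} (h : G ⊆ H) {n : ℕ}
    (hn : ShattersDepth G n) : ShattersDepth H n := by
  obtain ⟨t, ht⟩ := hn
  exact ⟨t, fun b hb => Set.Nonempty.mono (branchRestrict_mono h t b) (ht b hb)⟩

lemma le_Ldim_of_shattersDepth {G : Set (X → Bool)} {n : ℕ} (h : ShattersDepth G n) :
    (n : WithBot ℕ∞) ≤ Ldim G :=
  le_iSup (fun i : {n : ℕ // ShattersDepth G n} => (i.1 : WithBot ℕ∞)) ⟨n, h⟩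

lemma Ldim_mono {G H : Set (X → Bool)} (h : G ⊆ H) : Ldim G ≤ Ldim H :=
  iSup_le fun ⟨n, hn⟩ => le_Ldim_of_shattersDepth (shattersDepth_mono h hn)

lemma shattersTree_anti {G : Set (X → Bool)} {t : List Bool → X} {k n : ℕ} (hk : k ≤ n)
    (h : ShattersTree G t n) : ShattersTree G t k := by
  intro b hb
  obtain ⟨f, hf, hf2⟩ := h (b ++ List.replicate (n - k) false) (by simp [hb]; omega)
  refine ⟨f, hf, fun i hi => ?_⟩
  rw [hb] at hi
  have hi' : i < b.length := by omega
  have hilen : i < (b ++ List.replicate (n - k) false).length := by simp; omega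
  have := hf2 i hilen
  rw [List.take_append_of_le_length (by omega), List.getD_eq_getElem _ _ hilen,
      List.getElem_append_left hi'] at this
  rw [List.getD_eq_getElem _ _ hi']
  exact this

lemma shattersDepth_anti {G : Set (X → Bool)} {k n : ℕ} (hk : k ≤ n)
    (h : ShattersDepth G n) : ShattersDepth G k := by
  obtain ⟨t, ht⟩ := h
  exact ⟨t, shattersTree_anti hk ht⟩

lemma Ldim_le_of_forall {G : Set (X → Bool)} {k : ℕ}
    (h : ∀ n, ShattersDepth G n → n ≤ k) : Ldim G ≤ (k : WithBot ℕ∞) :=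
  iSup_le fun ⟨n, hn⟩ => by exact_mod_cast h n hn

lemma shattersDepth_of_le_Ldim {G : Set (X → Bool)} {m : ℕ}
    (h : (m : WithBot ℕ∞) ≤ Ldim G) : ShattersDepth G m := by
  by_contra hc
  cases m with
  | zero =>
    have he : IsEmpty {n : ℕ // ShattersDepth G n} :=
      ⟨fun ⟨n, hn⟩ => hc (shattersDepth_anti (Nat.zero_le n) hn)⟩
    have : Ldim G = ⊥ := by
      rw [Ldim]
      exact iSup_of_empty _
    rw [this] at h
    simp at h
  | succ k =>
    have hle : Ldim G ≤ (k : WithBot ℕ∞) :=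
      Ldim_le_of_forall fun n hn => by
        by_contra hn'
        exact hc (shattersDepth_anti (by omega) hn)
    have h2 := h.trans hle
    have : (k : ℕ) + 1 ≤ k := by exact_mod_cast h2
    omega

lemma nonempty_of_shattersDepth_zero {G : Set (X → Bool)} (h : ShattersDepth G 0) :
    G.Nonempty := by
  obtain ⟨t, ht⟩ := h
  obtain ⟨f, hf, -⟩ := ht [] rfl
  exact ⟨f, hf⟩

lemma shattersDepth_zero_of_nonempty {G : Set (X → Bool)} (hG : G.Nonempty) (x : X) :
    ShattersDepth G 0 := by
  refine ⟨fun _ => x, fun b hb => ?_⟩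
  rw [List.length_eq_zero_iff] at hb
  subst hb
  exact ⟨hG.some, hG.some_mem, fun i hi => by simp at hi⟩

lemma shattersDepth_succ_of_res {G : Set (X → Bool)} {x : X} {m : ℕ}
    (h0 : ShattersDepth (res G x false) m) (h1 : ShattersDepth (res G x true) m) :
    ShattersDepth G (m + 1) := by
  obtain ⟨t0, ht0⟩ := h0
  obtain ⟨t1, ht1⟩ := h1
  refine ⟨fun l => match l with | [] => x | c :: l' => if c then t1 l' else t0 l', ?_⟩
  rintro (_ | ⟨c, rest⟩) hb
  · simp at hb
  · have hrest : rest.length = m := by simpa using hb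
    have hne : (branchRestrict (res G x c) (fun l => if c then t1 l else t0 l) rest).Nonempty := by
      cases c
      · simpa using ht0 rest hrest
      · simpa using ht1 rest hrest
    obtain ⟨f, hfm, hf⟩ := hne
    refine ⟨f, hfm.1, fun i hi => ?_⟩
    match i with
    | 0 => simpa using hfm.2
    | j + 1 =>
      have hj : j < rest.length := by simpa using hi
      have hstep := hf j hj
      show f (if c then t1 (rest.take j) else t0 (rest.take j)) = (c :: rest).getD (j + 1) false
      rw [List.getD_cons_succ]
      exact hstep

lemma soa_eq_of_res {G : Set (X → Bool)} {d : ℕ} (hX : Nonempty X) (hne : G.Nonempty)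
    (hle : Ldim G ≤ (d : WithBot ℕ∞)) {x : X} {c : Bool}
    (h : Ldim G ≤ Ldim (res G x c)) : SOA G x = c := by
  have hsub : ∀ b, res G x b ⊆ G := fun b f hf => hf.1
  have hres : Ldim (res G x c) = Ldim G := le_antisymm (Ldim_mono (hsub c)) h
  have h0 : ((0 : ℕ) : WithBot ℕ∞) ≤ Ldim G :=
    le_Ldim_of_shattersDepth (shattersDepth_zero_of_nonempty hne hX.some)
  obtain ⟨m, hm⟩ : ∃ m : ℕ, Ldim G = (m : WithBot ℕ∞) := by
    cases hL : Ldim G with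
    | bot => rw [hL] at h0; simp at h0
    | coe a =>
      rw [hL] at hle
      have ha : a ≤ (d : ℕ∞) := by exact_mod_cast hle
      lift a to ℕ using (ha.trans_lt (by exact_mod_cast WithTop.coe_lt_top d)).ne with m
      exact ⟨m, by exact_mod_cast rfl⟩
  have hrt : Ldim (res G x true) ≤ Ldim G := Ldim_mono (hsub _)
  have hrf : Ldim (res G x false) ≤ Ldim G := Ldim_mono (hsub _)
  cases c with
  | true =>
    unfold SOA
    rw [if_pos (hrf.trans hres.ge)]
  | false =>
    have hP : ¬ Ldim (res G x false) ≤ Ldim (res G x true) := by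
      intro hcond
      have htrue : Ldim G ≤ Ldim (res G x true) := hres ▸ hcond
      have s0 : ShattersDepth (res G x false) m :=
        shattersDepth_of_le_Ldim (by rw [hres, hm])
      have s1 : ShattersDepth (res G x true) m :=
        shattersDepth_of_le_Ldim (hm ▸ htrue)
      have hsucc := le_Ldim_of_shattersDepth (shattersDepth_succ_of_res s0 s1)
      rw [hm] at hsucc
      have : m + 1 ≤ m := by exact_mod_cast hsucc
      omega
    unfold SOA
    rw [if_neg hP]

lemma main_part1 {F : Set (X → Bool)} {d : ℕ} (hF : Ldim F = (d : WithBot ℕ∞))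
    (t : List Bool → X)
    (hsh : ShattersTree {h : X → Bool | ∃ G ⊆ F, G.Nonempty ∧ Irred G (d + 1) ∧ h = SOA G}
      t (d + 1)) :
    ShattersTree F t (d + 1) := by
  intro b hb
  obtain ⟨h, hmem, hlab⟩ := hsh b hb
  obtain ⟨G, hGF, hGne, hGirr, rfl⟩ := hmem
  have hX : Nonempty X := ⟨t []⟩
  have hGd : Ldim G ≤ (d : WithBot ℕ∞) := hF ▸ Ldim_mono hGF
  obtain ⟨c, hcl, hcL⟩ := hGirr (fun l => t (b.take l.length))
  have hagree : ∀ i < d + 1, c.getD i false = b.getD i false := by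
    intro i hi
    have hlen : (c.take i).length = i := by rw [List.length_take, hcl]; omega
    have hsub : branchRestrict G (fun l => t (b.take l.length)) c ⊆
        res G (t (b.take i)) (c.getD i false) := by
      intro f hf
      refine ⟨hf.1, ?_⟩
      have hfi := hf.2 i (by rw [hcl]; exact hi)
      simpa [hlen] using hfi
    have hresle : Ldim G ≤ Ldim (res G (t (b.take i)) (c.getD i false)) :=
      hcL ▸ Ldim_mono hsub
    have hsoa := soa_eq_of_res hX hGne hGd hresle
    rw [← hsoa]
    exact hlab i (by rw [hb]; exact hi)
  have hcb : c = b := by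
    apply List.ext_getElem (by rw [hcl, hb])
    intro i h1 h2
    have hg := hagree i (by rw [← hcl]; exact h1)
    rwa [List.getD_eq_getElem _ _ h1, List.getD_eq_getElem _ _ h2] at hg
  rw [hcb] at hcL
  have h0G : ((0 : ℕ) : WithBot ℕ∞) ≤ Ldim G :=
    le_Ldim_of_shattersDepth (shattersDepth_zero_of_nonempty hGne hX.some)
  have hbn : ShattersDepth (branchRestrict G (fun l => t (b.take l.length)) b) 0 :=
    shattersDepth_of_le_Ldim (by rw [hcL]; exact h0G)
  obtain ⟨f, hfG, hfb⟩ := nonempty_of_shattersDepth_zero hbn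
  refine ⟨f, hGF hfG, fun i hi => ?_⟩
  have hlen : (b.take i).length = i := by rw [List.length_take]; omega
  have := hfb i hi
  simpa [hlen] using this

end Helpers

/-- With `Ldim F = d` and `F̃` the class of SOA classifiers of nonempty `(d+1)`-irreducible
subclasses of `F`: any depth-`(d+1)` tree shattered by `F̃` is shattered by `F`;
consequently `F̃` shatters no tree of depth `d+1`. -/
theorem stmt6 {X : Type*} (F : Set (X → Bool)) (d : ℕ)
    (hF : Ldim F = (d : WithBot ℕ∞)) :
    (∀ t : List Bool → X,
      ShattersTree {h : X → Bool | ∃ G ⊆ F, G.Nonempty ∧ Irred G (d + 1) ∧ h = SOA G} t (d + 1) →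
      ShattersTree F t (d + 1)) ∧
    ¬ ShattersDepth {h : X → Bool | ∃ G ⊆ F, G.Nonempty ∧ Irred G (d + 1) ∧ h = SOA G}
        (d + 1) := by
  constructor
  · exact fun t => main_part1 hF t
  · rintro ⟨t, ht⟩
    have hs : ShattersDepth F (d + 1) := ⟨t, main_part1 hF t ht⟩
    have hle := le_Ldim_of_shattersDepth hs
    rw [hF] at hle
    have : d + 1 ≤ d := by exact_mod_cast hle
    omega
end

section
/- Suppose G ⊆ {-1,1}^X is not k-irreducible but is (k-1)-irreducible. Then there exist points x_1,...,x_k ∈ X and a reducing array of depth k, i.e., tuples b^(1),...,b^(k+1) with b^(j) ∈ {-1,1}^{min(j,k)}, satisfying b^(j+1)_{j'} = b^(j)_{j'} for j' < j ≤ k and b^(j+1)_j = -b^(j)_j for j ≤ k, such that for every j ∈ [k+1]: 0 ≤ Ldim(G|_{(x_1, b^(j)_1),...,(x_{min(j,k)}, b^(j)_{min(j,k)})}) < Ldim(G). -/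
open Classical

/-!
Take a depth-`k` tree `t` all of whose branches reduce `G`. Collapse in `t` every node at which
one of the two children classes is empty: the move there is forced and does not change the
restricted class. `(k-1)`-irreducibility applied to the collapsed tree gives a path `c` of length
`k-1` keeping `Ldim G`. This path meets no collapsed node, for otherwise it would reach depth `k`
in `t` with full dimension; so `c` is a path of `t` along which both children of every node are
nonempty. The rows of the reducing array are the siblings of the nodes of `c` and the two
children of its endpoint. The children lose dimension because `t` is reducing; a sibling loses
dimension because a class of dimension `d` cannot have two children of dimension `d`. Finiteness
of `Ldim G` comes from `Ldim (A ∪ B) ≤ Ldim A + Ldim B + 1`.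
-/

section
variable {X : Type*}

section Restriction
variable {G : Set (X → Bool)} {t : List Bool → X} {p q : List Bool} {x : X} {v : Bool}

lemma branchRestrict_nil (G : Set (X → Bool)) (t : List Bool → X) :
    branchRestrict G t [] = G := by
  ext f; simp [branchRestrict]

lemma branchRestrict_subset : branchRestrict G t q ⊆ G := fun _ hf => hf.1

lemma res_subset : res G x v ⊆ G := fun _ hf => hf.1

lemma res_true_union_res_false (G : Set (X → Bool)) (x : X) :
    res G x true ∪ res G x false = G := by
  ext f; cases hf : f x <;> simp [res, hf]

lemma res_union (A B : Set (X → Bool)) (x : X) (v : Bool) :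
    res (A ∪ B) x v = res A x v ∪ res B x v := by
  ext f; simp only [res, Set.mem_union, Set.mem_ofPred_eq]; tauto

lemma res_eq_self_of_res_eq_empty (h : res G x (!v) = ∅) : res G x v = G := by
  refine (res_subset).antisymm fun f hf => ⟨hf, ?_⟩
  by_contra hfx
  exact (Set.eq_empty_iff_forall_notMem.1 h) f ⟨hf, Bool.eq_not_iff.2 hfx⟩

lemma branchRestrict_append_singleton (G : Set (X → Bool)) (t : List Bool → X)
    (q : List Bool) (v : Bool) :
    branchRestrict G t (q ++ [v]) = res (branchRestrict G t q) (t q) v := by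
  ext f
  simp only [branchRestrict, res, Set.mem_ofPred_eq, List.length_append, List.length_singleton,
    Nat.forall_lt_succ_right, List.take_left' rfl]
  constructor
  · rintro ⟨hG, hlt, hq⟩
    refine ⟨⟨hG, fun i hi => ?_⟩, ?_⟩
    · simpa [List.take_append_of_le_length hi.le, List.getElem?_append_left hi] using hlt i hi
    · simpa using hq
  · rintro ⟨⟨hG, hlt⟩, hq⟩
    refine ⟨hG, fun i hi => ?_, by simpa using hq⟩
    simpa [List.take_append_of_le_length hi.le, List.getElem?_append_left hi] using hlt i hi

lemma branchRestrict_anti (h : p <+: q) : branchRestrict G t q ⊆ branchRestrict G t p := by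
  obtain ⟨r, rfl⟩ := h
  intro f hf
  refine ⟨hf.1, fun i hi => ?_⟩
  simpa [List.take_append_of_le_length hi.le, List.getElem?_append_left hi] using
    hf.2 i (by simp; omega)

end Restriction

section Shattering
variable {A B : Set (X → Bool)} {t : List Bool → X} {m n : ℕ}

lemma ShattersTree.mono (hAB : A ⊆ B) (h : ShattersTree A t n) : ShattersTree B t n :=
  fun b hb => (h b hb).mono fun _ hf => ⟨hAB hf.1, hf.2⟩

lemma ShattersDepth.mono (hAB : A ⊆ B) (h : ShattersDepth A n) : ShattersDepth B n :=
  let ⟨t, ht⟩ := h; ⟨t, ht.mono hAB⟩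

lemma ShattersDepth.of_le (h : ShattersDepth A n) (hmn : m ≤ n) : ShattersDepth A m := by
  obtain ⟨t, ht⟩ := h
  refine ⟨t, fun b hb => ?_⟩
  exact (ht (b ++ List.replicate (n - m) false) (by simp; omega)).mono
    (branchRestrict_anti (List.prefix_append _ _))

lemma shattersDepth_zero [Nonempty X] (h : A.Nonempty) : ShattersDepth A 0 :=
  ⟨fun _ => Classical.arbitrary X, fun b hb => by
    rwa [List.length_eq_zero_iff.1 hb, branchRestrict_nil]⟩

def graft (x : X) (t₁ t₀ : List Bool → X) : List Bool → X
  | [] => x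
  | true :: r => t₁ r
  | false :: r => t₀ r

lemma shattersTree_graft {x : X} {t₁ t₀ : List Bool → X}
    (h₁ : ShattersTree (res A x true) t₁ n) (h₀ : ShattersTree (res A x false) t₀ n) :
    ShattersTree A (graft x t₁ t₀) (n + 1) := by
  rintro (_ | ⟨v, r⟩) hlen
  · simp at hlen
  have hr : r.length = n := by simpa using hlen
  obtain ⟨f, ⟨hfA, hfx⟩, hf⟩ :
      (branchRestrict (res A x v) (graft x t₁ t₀ ∘ (v :: ·)) r).Nonempty := by
    cases v
    exacts [h₀ r hr, h₁ r hr]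
  refine ⟨f, hfA, fun i hi => ?_⟩
  cases i with
  | zero => simpa [graft] using hfx
  | succ i => simpa using hf i (by simpa using hi)

lemma shattersDepth_succ_of_res_s7 (x : X) (h₁ : ShattersDepth (res A x true) n)
    (h₀ : ShattersDepth (res A x false) n) : ShattersDepth A (n + 1) :=
  let ⟨t₁, ht₁⟩ := h₁
  let ⟨t₀, ht₀⟩ := h₀
  ⟨graft x t₁ t₀, shattersTree_graft ht₁ ht₀⟩

lemma ShattersTree.res_root (h : ShattersTree A t (n + 1)) (v : Bool) :
    ShattersTree (res A (t []) v) (fun s => t (v :: s)) n := by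
  intro r hr
  obtain ⟨f, hfA, hf⟩ := h (v :: r) (by simp [hr])
  exact ⟨f, ⟨hfA, by simpa using hf 0 (by simp)⟩,
    fun i hi => by simpa using hf (i + 1) (by simp; omega)⟩

lemma shattersDepth_union (a b : ℕ) (h : ShattersDepth (A ∪ B) (a + b + 1)) :
    ShattersDepth A a ∨ ShattersDepth B b := by
  induction a generalizing A B with
  | zero =>
    have : Nonempty X := let ⟨t, _⟩ := h; ⟨t []⟩
    rcases A.eq_empty_or_nonempty with rfl | hA
    · exact .inr ((Set.empty_union B ▸ h).of_le (by omega))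
    · exact .inl (shattersDepth_zero hA)
  | succ a ih =>
    obtain ⟨t, ht⟩ := h
    rw [show a + 1 + b + 1 = a + b + 1 + 1 by omega] at ht
    have hres (v : Bool) : ShattersDepth (res A (t []) v) a ∨ ShattersDepth (res B (t []) v) b :=
      ih ⟨_, res_union A B (t []) v ▸ ht.res_root v⟩
    rcases hres true with h₁ | h₁
    · rcases hres false with h₀ | h₀
      · exact .inl (shattersDepth_succ_of_res_s7 (t []) h₁ h₀)
      · exact .inr (h₀.mono res_subset)
    · exact .inr (h₁.mono res_subset)

end Shattering

section Ldim
variable {A B : Set (X → Bool)} {x : X} {v : Bool} {n : ℕ}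

lemma le_ldim_iff : (n : WithBot ℕ∞) ≤ Ldim A ↔ ShattersDepth A n := by
  refine ⟨fun h => ?_, fun h => le_iSup_of_le (⟨n, h⟩ : {m // ShattersDepth A m}) le_rfl⟩
  by_contra hn
  have hlt (m : ℕ) (hm : ShattersDepth A m) : m < n := by
    by_contra! hnm
    exact hn (hm.of_le hnm)
  cases n with
  | zero =>
    have : Ldim A = ⊥ := iSup_eq_bot.2 fun ⟨m, hm⟩ => absurd (hlt m hm) (Nat.not_lt_zero m)
    simp [this] at h
  | succ n =>
    have : Ldim A ≤ n := iSup_le fun ⟨m, hm⟩ => by exact_mod_cast Nat.lt_succ_iff.1 (hlt m hm)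
    have := h.trans this
    norm_cast at this
    omega

lemma ldim_mono (hAB : A ⊆ B) : Ldim A ≤ Ldim B :=
  iSup_le fun ⟨_, hm⟩ => le_ldim_iff.2 (hm.mono hAB)

lemma ldim_eq_top_iff : Ldim A = ⊤ ↔ ∀ n : ℕ, ShattersDepth A n := by
  simp only [ENat.WithBot.eq_top_iff_forall_ge, le_ldim_iff]

lemma zero_le_ldim [Nonempty X] (hA : A.Nonempty) : 0 ≤ Ldim A := by
  exact_mod_cast le_ldim_iff.2 (shattersDepth_zero hA)

lemma exists_ldim_eq_natCast [Nonempty X] (hA : A.Nonempty) (htop : Ldim A ≠ ⊤) :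
    ∃ n : ℕ, Ldim A = n := by
  have h0 := zero_le_ldim hA
  generalize Ldim A = a at h0 htop ⊢
  induction a with
  | bot => simp at h0
  | coe e =>
    lift e to ℕ using by simpa using htop
    exact ⟨e, rfl⟩

lemma ldim_ne_top_of_res (h₁ : Ldim (res A x true) ≠ ⊤)
    (h₀ : Ldim (res A x false) ≠ ⊤) : Ldim A ≠ ⊤ := by
  simp only [ne_eq, ldim_eq_top_iff, not_forall] at *
  obtain ⟨a, ha⟩ := h₁
  obtain ⟨b, hb⟩ := h₀
  refine ⟨a + b + 1, fun h => ?_⟩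
  rw [← res_true_union_res_false A x] at h
  exact (shattersDepth_union a b h).elim ha hb

lemma ldim_res_lt_of_le_ldim_res (hA : Ldim A ≤ n) (hv : n ≤ Ldim (res A x v)) :
    Ldim (res A x !v) < n := by
  by_contra! hnv
  rw [le_ldim_iff] at hv hnv
  have : ShattersDepth A (n + 1) := by
    cases v
    exacts [shattersDepth_succ_of_res_s7 x hnv hv, shattersDepth_succ_of_res_s7 x hv hnv]
  have := (le_ldim_iff.2 this).trans hA
  norm_cast at this
  omega

end Ldim

section Compression
variable {G : Set (X → Bool)} {t : List Bool → X} {k : ℕ} {p q s : List Bool}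

noncomputable def skipForced (G : Set (X → Bool)) (t : List Bool → X) (k : ℕ)
    (q : List Bool) : List Bool :=
  if q.length < k then
    if res (branchRestrict G t q) (t q) true = ∅ then skipForced G t k (q ++ [false])
    else if res (branchRestrict G t q) (t q) false = ∅ then skipForced G t k (q ++ [true])
    else q
  else q
termination_by k - q.length
decreasing_by all_goals simp only [List.length_append, List.length_singleton]; omega

lemma prefix_skipForced : q <+: skipForced G t k q := by
  fun_induction skipForced G t k q with
  | case1 q _ _ ih => exact (List.prefix_append q [false]).trans ih
  | case2 q _ _ _ ih => exact (List.prefix_append q [true]).trans ih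
  | case3 | case4 => exact List.prefix_refl _

lemma branchRestrict_skipForced :
    branchRestrict G t (skipForced G t k q) = branchRestrict G t q := by
  fun_induction skipForced G t k q with
  | case1 q _ he ih | case2 q _ _ he ih =>
    rw [ih, branchRestrict_append_singleton, res_eq_self_of_res_eq_empty he]
  | case3 | case4 => rfl

lemma res_nonempty_of_skipForced_eq (hq : q.length < k) (hfix : skipForced G t k q = q)
    (v : Bool) : (res (branchRestrict G t q) (t q) v).Nonempty := by
  have hlen (v : Bool) : skipForced G t k (q ++ [v]) ≠ q := by
    intro h
    have := (prefix_skipForced (G := G) (t := t) (k := k) (q := q ++ [v])).length_le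
    simp [h] at this
  rw [skipForced, if_pos hq] at hfix
  rw [Set.nonempty_iff_ne_empty]
  split_ifs at hfix with h₁ h₀
  · exact absurd hfix (hlen false)
  · exact absurd hfix (hlen true)
  · cases v
    exacts [h₀, h₁]

/-- The node of `t` reached along the path `s` of the tree obtained from `t` by collapsing
forced moves. -/
noncomputable def compressPath (G : Set (X → Bool)) (t : List Bool → X) (k : ℕ)
    (s : List Bool) : List Bool :=
  s.foldl (fun q v => skipForced G t k (q ++ [v])) (skipForced G t k [])

lemma compressPath_nil : compressPath G t k [] = skipForced G t k [] := rfl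

lemma compressPath_append_singleton (s : List Bool) (v : Bool) :
    compressPath G t k (s ++ [v]) = skipForced G t k (compressPath G t k s ++ [v]) := by
  simp [compressPath, List.foldl_append]

lemma branchRestrict_compressPath (s : List Bool) :
    branchRestrict G (t ∘ compressPath G t k) s = branchRestrict G t (compressPath G t k s) := by
  induction s using List.reverseRecOn with
  | nil => rw [branchRestrict_nil, compressPath_nil, branchRestrict_skipForced, branchRestrict_nil]
  | append_singleton s v ih =>
    rw [branchRestrict_append_singleton, ih, compressPath_append_singleton,
      branchRestrict_skipForced, branchRestrict_append_singleton, Function.comp_apply]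

lemma length_le_length_compressPath (s : List Bool) :
    s.length ≤ (compressPath G t k s).length := by
  induction s using List.reverseRecOn with
  | nil => simp
  | append_singleton s v ih =>
    rw [compressPath_append_singleton]
    have := (prefix_skipForced (G := G) (t := t) (k := k)
      (q := compressPath G t k s ++ [v])).length_le
    simp only [List.length_append, List.length_singleton] at this ⊢
    omega

lemma compressPath_eq_self (h : (compressPath G t k s).length ≤ s.length) :
    compressPath G t k s = s ∧ ∀ p, p <+: s → skipForced G t k p = p := by
  induction s using List.reverseRecOn with
  | nil =>
    have hnil : skipForced G t k [] = [] :=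
      List.eq_nil_of_length_eq_zero (by simpa [compressPath_nil] using h)
    exact ⟨hnil, fun p hp => by rwa [List.prefix_nil.1 hp]⟩
  | append_singleton s v ih =>
    rw [compressPath_append_singleton] at h ⊢
    have hpre := prefix_skipForced (G := G) (t := t) (k := k) (q := compressPath G t k s ++ [v])
    have hs := length_le_length_compressPath (G := G) (t := t) (k := k) s
    have hlen := hpre.length_le
    simp only [List.length_append, List.length_singleton] at h hlen
    obtain ⟨hcs, hfixed⟩ := ih (by omega)
    rw [hcs] at h hpre ⊢
    have hfix := (hpre.eq_of_length (hpre.length_le.antisymm (by simpa using h))).symm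
    refine ⟨hfix, fun p hp => ?_⟩
    rcases List.prefix_concat_iff.1 hp with rfl | hp
    exacts [hfix, hfixed p hp]

end Compression

lemma exists_splitting_path_of_not_irred {G : Set (X → Bool)} {K : ℕ} (hnot : ¬ Irred G (K + 1))
    (hirr : Irred G K) :
    ∃ (t : List Bool → X) (c : List Bool), c.length = K ∧
      Ldim (branchRestrict G t c) = Ldim G ∧
      (∀ p, p <+: c → ∀ v, (res (branchRestrict G t p) (t p) v).Nonempty) ∧
      ∀ v, Ldim (branchRestrict G t (c ++ [v])) < Ldim G := by
  simp only [Irred, not_forall, not_exists, not_and] at hnot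
  obtain ⟨t, ht⟩ := hnot
  obtain ⟨c, hc, hcL⟩ := hirr (t ∘ compressPath G t (K + 1))
  rw [branchRestrict_compressPath] at hcL
  have hlen : (compressPath G t (K + 1) c).length ≤ c.length := by
    by_contra! hlong
    refine ht ((compressPath G t (K + 1) c).take (K + 1)) (by simp; omega) ?_
    exact (ldim_mono branchRestrict_subset).antisymm
      (hcL ▸ ldim_mono (branchRestrict_anti (List.take_prefix _ _)))
  obtain ⟨hfix, hforced⟩ := compressPath_eq_self hlen
  rw [hfix] at hcL
  refine ⟨t, c, hc, hcL, fun p hp v => ?_, fun v => ?_⟩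
  · exact res_nonempty_of_skipForced_eq (by have := hp.length_le; omega) (hforced p hp) v
  · exact (ldim_mono branchRestrict_subset).lt_of_ne (ht _ (by simp [hc]))

/-- Row `j` of the array is `(c₁, …, c_{j-1}, ¬c_j)`, with 1-based positions. Past the end of `c`
the junk bit `c.getD _ false = false` is used, so the last two rows are the two children of the
endpoint of `c`. -/
def reducingArray (c : List Bool) (j i : ℕ) : Bool :=
  if i < j then c.getD (i - 1) false else !c.getD (i - 1) false

lemma restrictList_ofFn_eq_branchRestrict (G : Set (X → Bool)) (t : List Bool → X)
    (x : ℕ → X) (β : ℕ → Bool) {n : ℕ} (q : List Bool) (hq : q.length = n)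
    (hx : ∀ i < n, x (i + 1) = t (q.take i)) (hβ : ∀ i < n, β (i + 1) = q.getD i false) :
    restrictList G (List.ofFn fun i : Fin n => (x (i.1 + 1), β (i.1 + 1))) =
      branchRestrict G t q := by
  subst hq
  ext f
  simp +contextual only [restrictList, branchRestrict, Set.mem_ofPred_eq, List.forall_mem_ofFn_iff,
    Fin.forall_iff, hx, hβ]

lemma restrictList_reducingArray (G : Set (X → Bool)) (t : List Bool → X) (c : List Bool)
    {j n : ℕ} (hn : 1 ≤ n) (hnj : n ≤ j) (hnc : n ≤ c.length + 1) :
    restrictList G (List.ofFn fun i : Fin n => (t (c.take i), reducingArray c j (i.1 + 1))) =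
      branchRestrict G t (c.take (n - 1) ++ [reducingArray c j n]) := by
  have hlen : (c.take (n - 1)).length = n - 1 := by simp; omega
  refine restrictList_ofFn_eq_branchRestrict G t (fun i => t (c.take (i - 1))) _ _
    (by simp; omega) (fun i hi => ?_) (fun i hi => ?_)
  · rw [List.take_append_of_le_length (by omega), List.take_take, min_eq_left (by omega)]
    rfl
  · rcases (Nat.le_sub_one_of_lt hi).lt_or_eq with hi' | rfl
    · rw [List.getD_append _ _ _ _ (by omega), List.getD_eq_getElem?_getD, List.getElem?_take,
        reducingArray, if_pos (by omega)]
      simp [hi']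
    · rw [List.getD_append_right _ _ _ _ (by omega)]
      simp [hlen, Nat.sub_add_cancel hn]

lemma ldim_branchRestrict_flip_lt {G : Set (X → Bool)} {t : List Bool → X} {c : List Bool}
    {d : ℕ} (hd : Ldim G = d) (hcL : Ldim (branchRestrict G t c) = d) {i : ℕ}
    (hi : i < c.length) : Ldim (branchRestrict G t (c.take i ++ [!c.getD i false])) < d := by
  rw [branchRestrict_append_singleton]
  refine ldim_res_lt_of_le_ldim_res (hd ▸ ldim_mono branchRestrict_subset) ?_
  rw [← branchRestrict_append_singleton, List.getD_eq_getElem _ _ hi, List.take_concat_get',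
    ← hcL]
  exact ldim_mono (branchRestrict_anti (List.take_prefix _ _))

end

theorem stmt7_general {X : Type*} (G : Set (X → Bool)) (k : ℕ)
    (hnot : ¬ Irred G k) (hirr : Irred G (k - 1)) :
    ∃ (x : ℕ → X) (b : ℕ → ℕ → Bool),
      (∀ j' j : ℕ, j' < j → j ≤ k → b (j + 1) j' = b j j') ∧
      (∀ j : ℕ, 1 ≤ j → j ≤ k → b (j + 1) j = ! b j j) ∧
      (∀ j : ℕ, 1 ≤ j → j ≤ k + 1 →
        (0 : WithBot ℕ∞) ≤
            Ldim (restrictList G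
              (List.ofFn fun i : Fin (min j k) => (x (i.1 + 1), b j (i.1 + 1)))) ∧
          Ldim (restrictList G
              (List.ofFn fun i : Fin (min j k) => (x (i.1 + 1), b j (i.1 + 1))))
            < Ldim G) := by
  rcases k with _ | K
  · exact absurd hirr hnot
  obtain ⟨t, c, hc, hcL, hsplit, hchild⟩ :=
    exists_splitting_path_of_not_irred hnot (by simpa using hirr)
  have : Nonempty X := ⟨t []⟩
  have hG : G.Nonempty :=
    ((hsplit [] List.nil_prefix true).mono res_subset).mono branchRestrict_subset
  have htop : Ldim G ≠ ⊤ := by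
    intro htop
    simp only [branchRestrict_append_singleton, htop] at hchild
    exact ldim_ne_top_of_res (hchild true).ne (hchild false).ne (hcL.trans htop)
  obtain ⟨d, hd⟩ := exists_ldim_eq_natCast hG htop
  refine ⟨fun j => t (c.take (j - 1)), reducingArray c, fun j' j hj _ => ?_, fun j _ _ => ?_,
    fun j hj₁ hj₂ => ?_⟩
  · simp [reducingArray, hj, hj.trans (Nat.lt_succ_self j)]
  · simp [reducingArray]
  simp only [Nat.add_sub_cancel]
  rw [restrictList_reducingArray G t c (by omega) (min_le_left _ _) (by omega)]
  refine ⟨zero_le_ldim ?_, ?_⟩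
  · rw [branchRestrict_append_singleton]
    exact hsplit _ (List.take_prefix _ _) _
  rw [hd]
  rcases le_or_gt j K with hjK | hjK
  · rw [min_eq_left (by omega), reducingArray, if_neg (lt_irrefl j)]
    exact ldim_branchRestrict_flip_lt hd (hcL.trans hd) (by omega)
  · rw [min_eq_right (by omega), Nat.add_sub_cancel, ← hc, List.take_length, ← hd]
    exact hchild _

/-- If `G` is not `k`-irreducible but is `(k-1)`-irreducible, then there are points
`x 1, ..., x k` and a reducing array `b` of depth `k` (here `b j i` is the `i`-th bit of the
`j`-th tuple, for `1 ≤ j ≤ k+1` and `1 ≤ i ≤ min j k`) such that every tuple of the array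
yields a nonempty restriction of `G` of strictly smaller Littlestone dimension. -/
theorem stmt7 {X : Type*} (G : Set (X → Bool)) (k : ℕ) (hk : 1 ≤ k)
    (hnot : ¬ Irred G k) (hirr : Irred G (k - 1)) :
    ∃ (x : ℕ → X) (b : ℕ → ℕ → Bool),
      (∀ j' j : ℕ, j' < j → j ≤ k → b (j + 1) j' = b j j') ∧
      (∀ j : ℕ, 1 ≤ j → j ≤ k → b (j + 1) j = ! b j j) ∧
      (∀ j : ℕ, 1 ≤ j → j ≤ k + 1 →
        (0 : WithBot ℕ∞) ≤
            Ldim (restrictList G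
              (List.ofFn fun i : Fin (min j k) => (x (i.1 + 1), b j (i.1 + 1)))) ∧
          Ldim (restrictList G
              (List.ofFn fun i : Fin (min j k) => (x (i.1 + 1), b j (i.1 + 1))))
            < Ldim G) :=
  stmt7_general G k hnot hirr
end
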